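/- arXiv:2002.08120 — 6 statements merged into one kernel-verified Lean document; each statement's English description precedes it below -/
import Mathlib

section
/- For every positive integer n, Cond(V_n) = (n / rad(n)) · Cond(V_{rad(n)}), where rad(n) is the product of the distinct prime factors of n. -/
open Matrix Polynomial BigOperators

/-- The Frobenius norm of a square complex matrix. -/
noncomputable def frobNorm {k : ℕ} (A : Matrix (Fin k) (Fin k) ℂ) : ℝ :=
  Real.sqrt (∑ i, ∑ j, ‖A i j‖ ^ 2)

/-- The condition number `Cond(A) = ‖A‖ ‖A⁻¹‖` (Frobenius norm). -/
noncomputable def condNum {k : ℕ} (A : Matrix (Fin k) (Fin k) ℂ) : ℝ :=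
  frobNorm A * frobNorm A⁻¹

/-- The Vandermonde matrix with (i,j) entry `ζ i ^ j` (0-indexed). -/
def vand {m : ℕ} (ζ : Fin m → ℂ) : Matrix (Fin m) (Fin m) ℂ :=
  Matrix.of fun i j => ζ i ^ (j : ℕ)

/-- The radical of `n`: the product of the distinct prime factors of `n`. -/
def rad (n : ℕ) : ℕ := ∏ p ∈ n.primeFactors, p

/-- The Ramanujan sum `c_n(t)`: the sum of the `t`-th powers of the
primitive `n`-th roots of unity in `ℂ`. -/
noncomputable def ram (n : ℕ) (t : ℤ) : ℂ := ∑ z ∈ primitiveRoots n ℂ, z ^ t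

/-!
Put `s = n / rad n`. Raising to the `s`-th power maps the primitive `n`-th roots onto the primitive
`rad n`-th roots, and each fibre consists of exactly `s` points (there are at most `s` of them, and
`φ n = s * φ (rad n)`). Indexing the columns of `V_n` by pairs `(a, j)` with exponent `j + s * a`,
the inverse of `V_n` is explicit: its row `(a, j)`, column `k` entry is
`s⁻¹ * (V_{rad n})⁻¹ a (τ k) * ζ_k ^ (-j)`, where `τ k` indexes `ζ_k ^ s`: the `(i, k)` entry of
the product factors as an entry of `V_{rad n} (V_{rad n})⁻¹` times the geometric sum
`∑_{j < s} (ζ_i / ζ_k) ^ j`, which vanishes for distinct points of one fibre. Every entry has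
modulus `s⁻¹ |(V_{rad n})⁻¹ a b|`, and each pair `(a, b)` occurs `s * s` times, so
`‖V_n⁻¹‖ = ‖V_{rad n}⁻¹‖`, while the unimodular Vandermonde matrices have `‖V_n‖ = φ n` and
`‖V_{rad n}‖ = φ (rad n)`.
-/

open Finset

lemma isUnit_det_vand {m : ℕ} {ξ : Fin m → ℂ} (hξ : Function.Injective ξ) :
    IsUnit (vand ξ).det :=
  isUnit_iff_ne_zero.mpr (det_vandermonde_ne_zero_iff.mpr hξ)

lemma frobNorm_vand_of_norm_eq_one {m : ℕ} {ζ : Fin m → ℂ} (h : ∀ i, ‖ζ i‖ = 1) :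
    frobNorm (vand ζ) = m := by
  simp [frobNorm, vand, norm_pow, h]

lemma sum_fin_pow_mul_inv_eq_ite {K : Type*} [Field K] [DecidableEq K] {s : ℕ} {x y : K}
    (hy : y ≠ 0) (hxy : x ^ s = y ^ s) :
    ∑ j : Fin s, (x * y⁻¹) ^ (j : ℕ) = if x = y then (s : K) else 0 := by
  rw [Fin.sum_univ_eq_sum_range]
  split_ifs with h
  · simp [h, hy]
  · have hne : x * y⁻¹ ≠ 1 := fun h' => h (by rwa [mul_inv_eq_one₀ hy] at h')
    rw [geom_sum_eq hne, mul_pow, inv_pow, hxy, mul_inv_cancel₀ (pow_ne_zero _ hy), sub_self,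
      zero_div]

lemma card_fiber_eq_of_pow_eq {K : Type*} [Field K] {m m' s : ℕ} (hm : m' * s = m)
    {ζ : Fin m → K} (hζ : Function.Injective ζ) {ξ : Fin m' → K} {τ : Fin m → Fin m'}
    (hτ : ∀ i, ζ i ^ s = ξ (τ i)) (b : Fin m') : #{k | τ k = b} = s := by
  classical
  rcases Nat.eq_zero_or_pos s with rfl | hs
  · rw [mul_zero] at hm
    subst hm
    simp
  have hle : ∀ b ∈ univ, #{k | τ k = b} ≤ s := fun b _ =>
    calc #{k | τ k = b} = #(({k | τ k = b} : Finset _).image ζ) :=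
          (card_image_of_injective _ hζ).symm
      _ ≤ #(nthRoots s (ξ b)).toFinset := card_le_card fun z hz => by
        obtain ⟨k, hk, rfl⟩ := mem_image.1 hz
        rw [Multiset.mem_toFinset, mem_nthRoots hs, hτ, (mem_filter.1 hk).2]
      _ ≤ s := (Multiset.toFinset_card_le _).trans (card_nthRoots _ _)
  have hsum : ∑ b, #{k | τ k = b} = ∑ _b : Fin m', s := by
    rw [← card_eq_sum_card_fiberwise fun k _ => mem_univ (τ k)]
    simp [hm]
  exact (sum_eq_sum_iff_of_le hle).1 hsum b (mem_univ b)

lemma sum_comp_eq_smul_sum_of_card_fiber {ι κ M : Type*} [Fintype ι] [Fintype κ] [DecidableEq κ]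
    [AddCommMonoid M] {τ : ι → κ} {s : ℕ} (h : ∀ b, #{k | τ k = b} = s) (f : κ → M) :
    ∑ k, f (τ k) = s • ∑ b, f b := by
  calc ∑ k, f (τ k) = ∑ b, ∑ k with τ k = b, f (τ k) := (sum_fiberwise _ _ _).symm
    _ = ∑ b, s • f b := sum_congr rfl fun b _ => by
      rw [sum_congr rfl fun k hk => by rw [(mem_filter.1 hk).2], sum_const, h]
    _ = s • ∑ b, f b := (smul_sum ..).symm

section FibredVandermonde

variable {m m' s : ℕ} (hm : m' * s = m) (ζ : Fin m → ℂ) (ξ : Fin m' → ℂ) (τ : Fin m → Fin m')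

def blockEquiv : Fin m' × Fin s ≃ Fin m := finProdFinEquiv.trans (finCongr hm)

lemma blockEquiv_apply_val (x : Fin m' × Fin s) :
    (blockEquiv hm x : ℕ) = x.2 + s * x.1 := rfl

noncomputable def vandFibredInv : Matrix (Fin m) (Fin m) ℂ :=
  of fun p k => (s : ℂ)⁻¹ * (vand ξ)⁻¹ ((blockEquiv hm).symm p).1 (τ k) *
    (ζ k)⁻¹ ^ (((blockEquiv hm).symm p).2 : ℕ)

lemma vandFibredInv_blockEquiv (a : Fin m') (j : Fin s) (k : Fin m) :
    vandFibredInv hm ζ ξ τ (blockEquiv hm (a, j)) k =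
      (s : ℂ)⁻¹ * (vand ξ)⁻¹ a (τ k) * (ζ k)⁻¹ ^ (j : ℕ) := by
  simp [vandFibredInv]

lemma sum_blockEquiv {M : Type*} [AddCommMonoid M] (f : Fin m → M) :
    ∑ p, f p = ∑ a : Fin m', ∑ j : Fin s, f (blockEquiv hm (a, j)) := by
  rw [← (blockEquiv hm).sum_comp, Fintype.sum_prod_type]

variable {ζ ξ τ}

lemma vand_mul_vandFibredInv (hζ : Function.Injective ζ) (hζ0 : ∀ i, ζ i ≠ 0)
    (hξ : Function.Injective ξ) (hτ : ∀ i, ζ i ^ s = ξ (τ i)) :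
    vand ζ * vandFibredInv hm ζ ξ τ = 1 := by
  ext i k
  have hfactor : (vand ζ * vandFibredInv hm ζ ξ τ) i k =
      (s : ℂ)⁻¹ * (1 : Matrix (Fin m') (Fin m') ℂ) (τ i) (τ k) *
        ∑ j : Fin s, (ζ i * (ζ k)⁻¹) ^ (j : ℕ) := by
    rw [mul_apply, sum_blockEquiv hm, ← mul_nonsing_inv _ (isUnit_det_vand hξ), mul_apply,
      mul_assoc, sum_mul_sum, mul_sum]
    refine sum_congr rfl fun a _ => ?_
    rw [mul_sum]
    refine sum_congr rfl fun j _ => ?_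
    simp only [vandFibredInv_blockEquiv, vand, of_apply, blockEquiv_apply_val, ← hτ i]
    ring
  rw [hfactor]
  by_cases hτik : τ i = τ k
  · rw [sum_fin_pow_mul_inv_eq_ite (hζ0 k) (by rw [hτ, hτ, hτik]), hτik, one_apply_eq]
    by_cases hik : i = k
    · have hs : (s : ℂ) ≠ 0 := Nat.cast_ne_zero.2 fun hs => by
        subst hs hm
        exact i.elim0
      subst hik
      simp [hs]
    · simp [hζ.ne hik, one_apply_ne hik]
  · simp [one_apply_ne hτik, one_apply_ne (fun h => hτik (congrArg τ h))]

lemma frobNorm_vandFibredInv (hs : 0 < s) (hζ : Function.Injective ζ) (hζ1 : ∀ i, ‖ζ i‖ = 1)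
    (hτ : ∀ i, ζ i ^ s = ξ (τ i)) :
    frobNorm (vandFibredInv hm ζ ξ τ) = frobNorm (vand ξ)⁻¹ := by
  classical
  unfold frobNorm
  congr 1
  calc ∑ p, ∑ k, ‖vandFibredInv hm ζ ξ τ p k‖ ^ 2
      = ∑ a : Fin m', ∑ _j : Fin s, ∑ k, ((s : ℝ)⁻¹ * ‖(vand ξ)⁻¹ a (τ k)‖) ^ 2 := by
        rw [sum_blockEquiv hm]
        simp [vandFibredInv_blockEquiv, hζ1]
    _ = ∑ a : Fin m', ∑ _j : Fin s, (s : ℝ)⁻¹ ^ 2 * (s • ∑ b, ‖(vand ξ)⁻¹ a b‖ ^ 2) := by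
        refine sum_congr rfl fun a _ => sum_congr rfl fun _ _ => ?_
        rw [← sum_comp_eq_smul_sum_of_card_fiber (card_fiber_eq_of_pow_eq hm hζ hτ)
          fun b => ‖(vand ξ)⁻¹ a b‖ ^ 2, mul_sum]
        simp only [mul_pow]
    _ = ∑ a, ∑ b, ‖(vand ξ)⁻¹ a b‖ ^ 2 := by
        simp only [sum_const, card_univ, Fintype.card_fin, nsmul_eq_mul]
        field_simp

end FibredVandermonde

theorem condNum_vand_of_pow_mem_range {m m' s : ℕ} (hm : m' * s = m) (hs : 0 < s)
    {ζ : Fin m → ℂ} (hζ : Function.Injective ζ) (hζ1 : ∀ i, ‖ζ i‖ = 1)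
    {ξ : Fin m' → ℂ} (hξ : Function.Injective ξ) (hξ1 : ∀ b, ‖ξ b‖ = 1)
    (hpow : ∀ i, ζ i ^ s ∈ Set.range ξ) :
    condNum (vand ζ) = s * condNum (vand ξ) := by
  choose τ hτ using hpow
  have hτ' : ∀ i, ζ i ^ s = ξ (τ i) := fun i => (hτ i).symm
  have hζ0 : ∀ i, ζ i ≠ 0 := fun i => norm_ne_zero_iff.1 (by simp [hζ1])
  rw [condNum, condNum, inv_eq_right_inv (vand_mul_vandFibredInv hm hζ hζ0 hξ hτ'),
    frobNorm_vandFibredInv hm hs hζ hζ1 hτ', frobNorm_vand_of_norm_eq_one hζ1,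
    frobNorm_vand_of_norm_eq_one hξ1, ← hm]
  push_cast
  ring

lemma rad_pos (n : ℕ) : 0 < rad n :=
  prod_pos fun _ hp => (Nat.prime_of_mem_primeFactors hp).pos

lemma rad_dvd (n : ℕ) : rad n ∣ n := Nat.prod_primeFactors_dvd n

lemma primeFactors_rad (n : ℕ) : (rad n).primeFactors = n.primeFactors :=
  Nat.primeFactors_prod fun _ hp => Nat.prime_of_mem_primeFactors hp

lemma totient_rad_mul_div_rad (n : ℕ) : (rad n).totient * (n / rad n) = n.totient := by
  rw [Nat.totient_eq_div_primeFactors_mul n, Nat.totient_eq_div_primeFactors_mul (rad n),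
    primeFactors_rad, ← rad, Nat.div_self (rad_pos n), one_mul, mul_comm]

lemma mem_range_of_isPrimitiveRoot {k : ℕ} (hk : 0 < k) {ξ : Fin k.totient → ℂ}
    (hξinj : Function.Injective ξ) (hξ : ∀ b, IsPrimitiveRoot (ξ b) k) {z : ℂ}
    (hz : IsPrimitiveRoot z k) : z ∈ Set.range ξ := by
  classical
  have himage : univ.image ξ = primitiveRoots k ℂ := by
    refine eq_of_subset_of_card_le (fun w hw => ?_) ?_
    · obtain ⟨b, -, rfl⟩ := mem_image.1 hw
      exact (mem_primitiveRoots hk).2 (hξ b)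
    · rw [Complex.card_primitiveRoots, card_image_of_injective _ hξinj, card_univ,
        Fintype.card_fin]
  have hz' : z ∈ univ.image ξ := himage ▸ (mem_primitiveRoots hk).2 hz
  simpa using hz'

/-- For every positive integer `n`,
`Cond(V_n) = (n / rad n) * Cond(V_{rad n})`. -/
theorem cond_vand_eq_div_rad_mul_cond_vand_rad (n : ℕ) (hn : 0 < n)
    (ζ : Fin n.totient → ℂ) (hζinj : Function.Injective ζ)
    (hζ : ∀ i, IsPrimitiveRoot (ζ i) n)
    (ξ : Fin (rad n).totient → ℂ) (hξinj : Function.Injective ξ)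
    (hξ : ∀ i, IsPrimitiveRoot (ξ i) (rad n)) :
    condNum (vand ζ) = ((n : ℝ) / (rad n : ℝ)) * condNum (vand ξ) := by
  have hr := rad_pos n
  have hs : 0 < n / rad n := Nat.div_pos (Nat.le_of_dvd hn (rad_dvd n)) hr
  rw [← Nat.cast_div (rad_dvd n) (Nat.cast_ne_zero.2 hr.ne')]
  refine condNum_vand_of_pow_mem_range (totient_rad_mul_div_rad n) hs hζinj
    (fun i => (hζ i).norm'_eq_one hn.ne') hξinj (fun b => (hξ b).norm'_eq_one hr.ne') fun i => ?_
  exact mem_range_of_isPrimitiveRoot hr hξinj hξ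
    ((hζ i).pow hn (Nat.div_mul_cancel (rad_dvd n)).symm)
end

section
/- If n = p^k where k is a positive integer and p is a prime number, then Cond(V_n) = φ(n)·√(2(1 − 1/p)). -/
open Matrix Polynomial BigOperators

/-!
Entries of `V = vand ζ` have modulus one, so `‖V‖ = φ(n)`, and the Gram matrix `Vᴴ V` has
`(j, l)` entry `∑ ζᵢ ^ (l - j) = c_n(l - j)`, a Ramanujan sum. For `n = p ^ (k + 1)` the primitive
roots are the `n`-th roots of unity that are not `p ^ k`-th roots, whence
`c_n(t) = n [n ∣ t] - p ^ k [p ^ k ∣ t]` and `Vᴴ V = n • 1 - p ^ k • C`, where `C` is the 0/1 matrix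
of congruence modulo `p ^ k`. Since `C * C = (p - 1) • C`, the inverse of `Vᴴ V` is
`n⁻¹ • (1 + C)`, and `‖V⁻¹‖² = tr (Vᴴ V)⁻¹ = 2 φ(n) / n = 2 (1 - 1 / p)`.
-/

theorem IsPrimitiveRoot.sum_nthRootsFinset_zpow {K : Type*} [Field K] {w : K} {N : ℕ}
    (hw : IsPrimitiveRoot w N) (t : ℤ) :
    ∑ z ∈ nthRootsFinset N (1 : K), z ^ t = if (N : ℤ) ∣ t then (N : K) else 0 := by
  rcases N.eq_zero_or_pos with rfl | hN
  · simp
  have hmem (z : K) : z ∈ nthRootsFinset N (1 : K) ↔ z ^ N = 1 :=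
    Polynomial.mem_nthRootsFinset hN 1
  split_ifs with hdvd
  · rw [Finset.sum_congr rfl fun z hz => ?_, Finset.sum_const, hw.card_nthRootsFinset, nsmul_one]
    obtain ⟨s, rfl⟩ := hdvd
    rw [_root_.zpow_mul, zpow_natCast, (hmem z).1 hz, _root_.one_zpow]
  · have hw0 : w ≠ 0 := hw.ne_zero hN.ne'
    -- multiplication by `w` permutes the `N`-th roots of unity
    have hinv : ∑ z ∈ nthRootsFinset N (1 : K), z ^ t
        = w ^ t * ∑ z ∈ nthRootsFinset N (1 : K), z ^ t := by
      rw [Finset.mul_sum]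
      refine Finset.sum_nbij' (w⁻¹ * ·) (w * ·) ?_ ?_ ?_ ?_ ?_ <;>
        simp_all [mul_pow, hw.pow_eq_one, mul_zpow, zpow_ne_zero]
    have hwt : w ^ t ≠ 1 := mt (hw.zpow_eq_one_iff_dvd t).1 hdvd
    exact (mul_eq_zero.1 (by linear_combination hinv : (1 - w ^ t) * _ = 0)).resolve_left
      (sub_ne_zero.2 hwt.symm)

theorem primitiveRoots_prime_pow_succ {R : Type*} [CommRing R] [IsDomain R] [DecidableEq R]
    {p : ℕ} (hp : p.Prime) (k : ℕ) :
    primitiveRoots (p ^ (k + 1)) R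
      = nthRootsFinset (p ^ (k + 1)) (1 : R) \ nthRootsFinset (p ^ k) 1 := by
  have := Fact.mk hp
  ext z
  simp only [Finset.mem_sdiff, mem_primitiveRoots (pow_pos hp.pos _),
    Polynomial.mem_nthRootsFinset (pow_pos hp.pos _)]
  refine ⟨fun hz => ⟨hz.pow_eq_one, fun h => ?_⟩, fun ⟨h1, h2⟩ => ?_⟩
  · exact absurd (hz.dvd_of_pow_eq_one _ h)
      ((Nat.pow_dvd_pow_iff_le_right hp.one_lt).not.2 (by omega))
  · rw [← orderOf_eq_prime_pow h2 h1]
    exact IsPrimitiveRoot.orderOf z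

theorem ram_prime_pow_succ {p : ℕ} (hp : p.Prime) (k : ℕ) (t : ℤ) :
    ram (p ^ (k + 1)) t
      = (if ((p ^ (k + 1) : ℕ) : ℤ) ∣ t then ((p ^ (k + 1) : ℕ) : ℂ) else 0)
        - if ((p ^ k : ℕ) : ℤ) ∣ t then ((p ^ k : ℕ) : ℂ) else 0 := by
  have hsub : nthRootsFinset (p ^ k) (1 : ℂ) ⊆ nthRootsFinset (p ^ (k + 1)) 1 := fun z hz => by
    rw [Polynomial.mem_nthRootsFinset (pow_pos hp.pos _)] at hz ⊢
    rw [pow_succ, pow_mul, hz, one_pow]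
  rw [ram, primitiveRoots_prime_pow_succ hp, Finset.sum_sdiff_eq_sub hsub,
    (Complex.isPrimitiveRoot_exp _ (pow_ne_zero _ hp.ne_zero)).sum_nthRootsFinset_zpow,
    (Complex.isPrimitiveRoot_exp _ (pow_ne_zero _ hp.ne_zero)).sum_nthRootsFinset_zpow]

theorem sum_zpow_eq_ram {n : ℕ} {ζ : Fin n.totient → ℂ} (hζinj : Function.Injective ζ)
    (hζ : ∀ i, IsPrimitiveRoot (ζ i) n) (t : ℤ) : ∑ i, ζ i ^ t = ram n t := by
  rcases n.eq_zero_or_pos with rfl | hn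
  · have : IsEmpty (Fin (Nat.totient 0)) := by rw [Nat.totient_zero]; infer_instance
    rw [Finset.univ_eq_empty, Finset.sum_empty, ram, primitiveRoots_zero, Finset.sum_empty]
  have himage : Finset.univ.image ζ = primitiveRoots n ℂ :=
    Finset.eq_of_subset_of_card_le
      (Finset.image_subset_iff.2 fun i _ => (mem_primitiveRoots hn).2 (hζ i))
      (by rw [Finset.card_image_of_injective _ hζinj, Finset.card_univ, Fintype.card_fin,
        Complex.card_primitiveRoots])
  rw [ram, ← himage, Finset.sum_image fun a _ b _ h => hζinj h]

theorem conjTranspose_vand_mul_vand_apply {m : ℕ} {ζ : Fin m → ℂ} (hζ : ∀ i, ‖ζ i‖ = 1)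
    (j l : Fin m) : ((vand ζ)ᴴ * vand ζ) j l = ∑ i, ζ i ^ ((l : ℤ) - j) := by
  refine (Matrix.mul_apply ..).trans (Finset.sum_congr rfl fun i _ => ?_)
  have hζ0 : ζ i ≠ 0 := norm_ne_zero_iff.1 (by simp [hζ i])
  rw [conjTranspose_apply, vand, of_apply, of_apply, star_pow, Complex.star_def,
    ← Complex.inv_eq_conj (hζ i), zpow_sub₀ hζ0, zpow_natCast, zpow_natCast, inv_pow,
    div_eq_inv_mul]

def modEqMatrix (R : Type*) [Zero R] [One R] (m q : ℕ) : Matrix (Fin m) (Fin m) R :=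
  of fun j l => if (j : ℕ) ≡ l [MOD q] then 1 else 0

theorem trace_modEqMatrix (R : Type*) [AddCommMonoidWithOne R] (m q : ℕ) :
    trace (modEqMatrix R m q) = m := by
  simp [trace, modEqMatrix, Nat.ModEq.refl]

theorem modEqMatrix_mul_self {R : Type*} [NonAssocSemiring R] {m q : ℕ} (hq : 0 < q)
    (hqm : q ∣ m) : modEqMatrix R m q * modEqMatrix R m q = (m / q) • modEqMatrix R m q := by
  obtain ⟨r, rfl⟩ := hqm
  ext j l
  simp only [modEqMatrix, mul_apply, of_apply, Matrix.smul_apply, mul_ite, mul_one, mul_zero,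
    smul_ite, smul_zero, nsmul_one, Nat.mul_div_cancel_left _ hq]
  split_ifs with hjl
  · have hcount : ∑ t : Fin (q * r), (if (t : ℕ) ≡ j [MOD q] then (1 : R) else 0) = r := by
      rw [Fin.sum_univ_eq_sum_range (fun t => if t ≡ j [MOD q] then (1 : R) else 0),
        Finset.sum_boole, ← Nat.count_eq_card_filter_range, Nat.count_modEq_card _ hq]
      simp [Nat.mul_div_cancel_left _ hq]
    have hl (t : ℕ) : t ≡ l [MOD q] ↔ t ≡ j [MOD q] :=
      ⟨fun h => h.trans hjl.symm, (·.trans hjl)⟩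
    simp only [hl, Nat.ModEq.comm (a := (j : ℕ)), ← ite_and, and_self]
    exact hcount
  · refine Finset.sum_eq_zero fun t _ => ?_
    split_ifs with h₁ h₂ <;> first | rfl | exact absurd (h₂.trans h₁) hjl

theorem inv_smul_one_add_mul_smul_one_sub_smul {K A : Type*} [Field K] [Ring A] [Algebra K A]
    {c : A} {a b r : K} (hc : c * c = r • c) (hab : a = b * (r + 1)) (ha : a ≠ 0) :
    (a⁻¹ • (1 + c)) * (a • 1 - b • c) = 1 := by
  have hexpand : (1 + c) * (a • 1 - b • c) = a • (1 : A) + (a - b * (r + 1)) • c := by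
    rw [add_mul, mul_sub, mul_sub, one_mul, one_mul, mul_smul_comm, mul_smul_comm, hc, mul_one]
    module
  rw [smul_mul_assoc, hexpand, ← hab, sub_self, zero_smul, add_zero, smul_smul,
    inv_mul_cancel₀ ha, one_smul]

theorem conjTranspose_vand_mul_vand_prime_pow_succ {p k : ℕ} (hp : p.Prime)
    {ζ : Fin (p ^ (k + 1)).totient → ℂ} (hζinj : Function.Injective ζ)
    (hζ : ∀ i, IsPrimitiveRoot (ζ i) (p ^ (k + 1))) :
    (vand ζ)ᴴ * vand ζ
      = ((p ^ (k + 1) : ℕ) : ℂ) • 1 - ((p ^ k : ℕ) : ℂ) • modEqMatrix ℂ _ (p ^ k) := by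
  ext j l
  have hjl : ((p ^ (k + 1) : ℕ) : ℤ) ∣ (l : ℤ) - j ↔ j = l := by
    have hlt (i : Fin (p ^ (k + 1)).totient) : (i : ℕ) < p ^ (k + 1) :=
      i.2.trans_le (Nat.totient_le _)
    rw [← Nat.modEq_iff_dvd, Nat.ModEq, Nat.mod_eq_of_lt (hlt j), Nat.mod_eq_of_lt (hlt l),
      Fin.val_inj]
  rw [conjTranspose_vand_mul_vand_apply fun i => (hζ i).norm'_eq_one (pow_ne_zero _ hp.ne_zero),
    sum_zpow_eq_ram hζinj hζ, ram_prime_pow_succ hp]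
  simp only [hjl, ← Nat.modEq_iff_dvd]
  simp [modEqMatrix, one_apply]

theorem inv_smul_one_add_modEqMatrix_mul_conjTranspose_vand_mul_vand {p k : ℕ} (hp : p.Prime)
    {ζ : Fin (p ^ (k + 1)).totient → ℂ} (hζinj : Function.Injective ζ)
    (hζ : ∀ i, IsPrimitiveRoot (ζ i) (p ^ (k + 1))) :
    (((p ^ (k + 1) : ℕ) : ℂ)⁻¹ • (1 + modEqMatrix ℂ _ (p ^ k))) * ((vand ζ)ᴴ * vand ζ) = 1 := by
  have hr : (p ^ (k + 1)).totient / p ^ k = p - 1 := by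
    rw [Nat.totient_prime_pow_succ hp, Nat.mul_div_cancel_left _ (pow_pos hp.pos k)]
  have hC := modEqMatrix_mul_self (R := ℂ) (pow_pos hp.pos k)
    (Nat.totient_prime_pow_succ hp k ▸ dvd_mul_right _ _)
  rw [hr, ← Nat.cast_smul_eq_nsmul ℂ] at hC
  rw [conjTranspose_vand_mul_vand_prime_pow_succ hp hζinj hζ]
  exact inv_smul_one_add_mul_smul_one_sub_smul hC (by push_cast [Nat.cast_sub hp.one_le]; ring)
    (Nat.cast_ne_zero.2 (pow_ne_zero _ hp.ne_zero))

theorem frobNorm_nonneg {k : ℕ} (A : Matrix (Fin k) (Fin k) ℂ) : 0 ≤ frobNorm A :=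
  Real.sqrt_nonneg _

theorem frobNorm_of_norm_eq_one {k : ℕ} {A : Matrix (Fin k) (Fin k) ℂ}
    (hA : ∀ i j, ‖A i j‖ = 1) : frobNorm A = k := by
  simp [frobNorm, hA]

theorem sq_frobNorm_eq_re_trace {k : ℕ} (A : Matrix (Fin k) (Fin k) ℂ) :
    frobNorm A ^ 2 = (trace (A * Aᴴ)).re := by
  rw [frobNorm, Real.sq_sqrt (by positivity), trace]
  simp [mul_apply, Complex.mul_conj, Complex.normSq_eq_norm_sq, -Complex.ofReal_pow]

theorem sq_frobNorm_inv_of_mul_eq_one {k : ℕ} {V E : Matrix (Fin k) (Fin k) ℂ}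
    (hE : E * (Vᴴ * V) = 1) : frobNorm V⁻¹ ^ 2 = (trace E).re := by
  have hVinv : V⁻¹ = E * Vᴴ := inv_eq_left_inv (by rw [Matrix.mul_assoc, hE])
  rw [sq_frobNorm_eq_re_trace, hVinv, conjTranspose_mul, conjTranspose_conjTranspose,
    Matrix.mul_assoc, ← Matrix.mul_assoc Vᴴ, ← Matrix.mul_assoc E, hE, Matrix.one_mul,
    trace_conjTranspose, Complex.star_def, Complex.conj_re]

theorem condNum_vand_of_mul_eq_one {m : ℕ} {ζ : Fin m → ℂ} (hζ : ∀ i, ‖ζ i‖ = 1)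
    {E : Matrix (Fin m) (Fin m) ℂ} (hE : E * ((vand ζ)ᴴ * vand ζ) = 1) :
    condNum (vand ζ) = m * √(trace E).re := by
  rw [condNum, frobNorm_of_norm_eq_one fun i j => by simp [vand, hζ i],
    ← sq_frobNorm_inv_of_mul_eq_one hE, Real.sqrt_sq (frobNorm_nonneg _)]

/-- If `n = p ^ k` with `p` prime and `k ≥ 1`, then
`Cond(V_n) = φ(n) * √(2 * (1 - 1/p))`. -/
theorem cond_vand_prime_pow (p k : ℕ) (hp : p.Prime) (hk : 0 < k)
    (ζ : Fin (p ^ k).totient → ℂ) (hζinj : Function.Injective ζ)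
    (hζ : ∀ i, IsPrimitiveRoot (ζ i) (p ^ k)) :
    condNum (vand ζ) =
      ((p ^ k).totient : ℝ) * Real.sqrt (2 * (1 - 1 / (p : ℝ))) := by
  obtain ⟨k, rfl⟩ := Nat.exists_eq_add_one_of_ne_zero hk.ne'
  have htrace : ((p ^ (k + 1) : ℕ) : ℂ)⁻¹ * (2 * ((p ^ k * (p - 1) : ℕ) : ℂ))
      = ((2 * (1 - 1 / (p : ℝ)) : ℝ) : ℂ) := by
    have hp0 : (p : ℂ) ≠ 0 := Nat.cast_ne_zero.2 hp.ne_zero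
    push_cast [Nat.cast_sub hp.one_le]
    field_simp
    ring
  rw [condNum_vand_of_mul_eq_one (fun i => (hζ i).norm'_eq_one (pow_ne_zero _ hp.ne_zero))
      (inv_smul_one_add_modEqMatrix_mul_conjTranspose_vand_mul_vand hp hζinj hζ),
    trace_smul, trace_add, trace_one, trace_modEqMatrix, Fintype.card_fin, smul_eq_mul,
    ← two_mul, Nat.totient_prime_pow_succ hp, htrace, Complex.ofReal_re]
end

section
/- For every positive integer n, every entry of the matrix n·G_n^{−1} is a (rational) integer; that is, for all indices i, j, the complex number n·(G_n^{−1})_{i,j} lies in the image of ℤ in ℂ. -/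
open Matrix Polynomial BigOperators

/-!
Write `Φ = Φ_n` and `D_k = Φ'(ζ_k)`. By Lagrange interpolation, `V⁻¹` has entries `q_i(ζ_k) / D_k`,
where `q_i ∈ ℤ[Y]` is the coefficient of `X ^ i` in `(Φ(X) - Φ(Y)) / (X - Y)`, so
`G⁻¹ = V⁻¹ (V⁻¹)ᴴ` has entries `∑_k q_i(ζ_k) conj (q_j(ζ_k)) / (D_k conj D_k)`.
Differentiating `X ^ n - 1 = Φ · ∏_{d ∣ n, d < n} Φ_d` at `ζ_k` gives `D_k h(ζ_k) = n` for a fixed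
`h ∈ ℤ[X]`, so `n / conj D_k = conj (h(ζ_k))`; and conjugation maps `ℤ[ζ_k]` to itself since
`conj ζ_k = ζ_k ^ (n - 1)`. Hence `n (G⁻¹)_{ij} = ∑_k H(ζ_k) / Φ'(ζ_k)` for one `H ∈ ℤ[X]`, and by
Euler's formula this is the coefficient of `X ^ (φ(n) - 1)` in `H mod Φ`, an integer.
-/

open Finset

/-- The coefficient of `X ^ i` in `(p(X) - p(Y)) / (X - Y)`, as a polynomial in `Y`. -/
noncomputable def Polynomial.divXSubCoeff {R : Type*} [CommRing R] (p : R[X]) (i : ℕ) : R[X] :=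
  (p.map C /ₘ (X - C X)).coeff i

theorem Polynomial.coeff_map_divByMonic_X_sub_C {R S : Type*} [CommRing R] [CommRing S]
    [Algebra R S] (p : R[X]) (a : S) (i : ℕ) :
    (p.map (algebraMap R S) /ₘ (X - C a)).coeff i = aeval a (p.divXSubCoeff i) := by
  have hC : (aeval a).toRingHom.comp C = algebraMap R S := RingHom.ext (aeval_C a)
  change _ = (aeval a).toRingHom _
  rw [divXSubCoeff, ← coeff_map, map_divByMonic _ (monic_X_sub_C _), Polynomial.map_map, hC]
  simp

theorem Matrix.inv_vandermonde_apply {F : Type*} [Field F] {m : ℕ} {v : Fin m → F}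
    (hv : Function.Injective v) (i k : Fin m) :
    (vandermonde v)⁻¹ i k = (Lagrange.basis univ v k).coeff i := by
  have hvs : Set.InjOn v (univ : Finset (Fin m)) := hv.injOn
  suffices vandermonde v * of (fun (i k : Fin m) => (Lagrange.basis univ v k).coeff i) = 1 by
    rw [inv_eq_right_inv this, of_apply]
  ext l k
  have hdeg : (Lagrange.basis univ v k).natDegree < m := by
    rw [Lagrange.natDegree_basis hvs (mem_univ k), card_univ, Fintype.card_fin]
    exact Nat.sub_lt k.pos one_pos
  simp only [mul_apply, one_apply, vandermonde_apply, of_apply, mul_comm (v l ^ _)]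
  rw [Fin.sum_univ_eq_sum_range (fun i => (Lagrange.basis univ v k).coeff i * v l ^ i),
    ← eval_eq_sum_range' hdeg]
  split_ifs with hlk
  · exact hlk ▸ Lagrange.eval_basis_self hvs (mem_univ l)
  · exact Lagrange.eval_basis_of_ne (Ne.symm hlk) (mem_univ l)

section Interpolation

variable {R F : Type*} [CommRing R] [Field F] [Algebra R F] {m : ℕ} {f : R[X]} {v : Fin m → F}

theorem Matrix.inv_vandermonde_apply_of_map_eq_prod (hv : Function.Injective v)
    (hfv : f.map (algebraMap R F) = ∏ k, (X - C (v k))) (i k : Fin m) :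
    (vandermonde v)⁻¹ i k = aeval (v k) (f.divXSubCoeff i) / aeval (v k) (derivative f) := by
  have hnodal : f.map (algebraMap R F) = Lagrange.nodal univ v := hfv
  rw [inv_vandermonde_apply hv, Lagrange.basis_eq_prod_sub_inv_mul_nodal_div (mem_univ k),
    Lagrange.nodalWeight_eq_eval_derivative_nodal (mem_univ k), ← hnodal,
    ← divByMonic_eq_div _ (monic_X_sub_C _), coeff_C_mul, coeff_map_divByMonic_X_sub_C,
    derivative_map, eval_map_algebraMap, inv_mul_eq_div]

theorem Polynomial.sum_aeval_div_aeval_derivative (hf : f.Monic) (hv : Function.Injective v)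
    (hfv : f.map (algebraMap R F) = ∏ k, (X - C (v k))) (H : R[X]) :
    ∑ k, aeval (v k) H / aeval (v k) (derivative f) =
      algebraMap R F ((H %ₘ f).coeff (m - 1)) := by
  have : Nontrivial R := (algebraMap R F).domain_nontrivial
  have hnodal : f.map (algebraMap R F) = Lagrange.nodal univ v := hfv
  set P := (H %ₘ f).map (algebraMap R F)
  have hdeg : P.degree < #(univ : Finset (Fin m)) := calc
    P.degree ≤ (H %ₘ f).degree := degree_map_le
    _ < f.degree := degree_modByMonic_lt H hf
    _ = #univ := by
      rw [← hf.degree_map (algebraMap R F), hnodal, Lagrange.degree_nodal]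
  have heval : ∀ k, aeval (v k) H = P.eval (v k) := fun k => by
    rw [← modByMonic_add_div H f, aeval_add, aeval_mul, ← eval_map_algebraMap f, hnodal,
      Lagrange.eval_nodal_at_node (mem_univ k), zero_mul, add_zero, ← eval_map_algebraMap]
  have hm : m - 1 = #(univ : Finset (Fin m)) - 1 := by rw [card_univ, Fintype.card_fin]
  rw [← coeff_map, hm, Lagrange.coeff_eq_sum hv.injOn hdeg]
  refine sum_congr rfl fun k _ => ?_
  rw [heval, ← eval_map_algebraMap, ← derivative_map, hnodal,
    Lagrange.eval_nodal_derivative_eval_node_eq (mem_univ k), Lagrange.eval_nodal]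

end Interpolation

theorem cyclotomic_eq_prod_X_sub_C_of_injective {K : Type*} [CommRing K] [IsDomain K] {n : ℕ}
    (hn : 0 < n) {ζ : Fin n.totient → K} (hζinj : Function.Injective ζ)
    (hζ : ∀ k, IsPrimitiveRoot (ζ k) n) :
    cyclotomic n K = ∏ k, (X - C (ζ k)) := by
  classical
  have hroot := hζ ⟨0, Nat.totient_pos.2 hn⟩
  have himage : univ.image ζ = primitiveRoots n K := by
    refine eq_of_subset_of_card_le (fun x hx => ?_) ?_
    · obtain ⟨k, -, rfl⟩ := mem_image.1 hx
      exact (mem_primitiveRoots hn).2 (hζ k)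
    · rw [hroot.card_primitiveRoots, card_image_of_injective _ hζinj, card_univ,
        Fintype.card_fin]
  rw [cyclotomic_eq_prod_X_sub_primitiveRoots hroot, ← himage,
    prod_image fun a _ b _ h => hζinj h]

theorem IsPrimitiveRoot.aeval_derivative_cyclotomic_mul {K : Type*} [CommRing K] [IsDomain K]
    {n : ℕ} (hn : 0 < n) {w : K} (hw : IsPrimitiveRoot w n) :
    aeval w (derivative (cyclotomic n ℤ)) * aeval w (X * ∏ d ∈ n.properDivisors, cyclotomic d ℤ)
      = n := by
  have hfac := prod_cyclotomic_eq_X_pow_sub_one hn ℤ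
  rw [← Nat.cons_self_properDivisors hn.ne', prod_cons] at hfac
  have hroot : aeval w (cyclotomic n ℤ) = 0 := by
    rw [← eval_map_algebraMap, map_cyclotomic, (hw.isRoot_cyclotomic hn).eq_zero]
  have hder := congrArg (fun p => aeval w (derivative p)) hfac
  simp only [derivative_mul, derivative_sub, derivative_X_pow, derivative_one, sub_zero, map_add,
    map_mul, hroot, zero_mul, add_zero] at hder
  calc _ = aeval w (derivative (cyclotomic n ℤ)) *
        aeval w (∏ d ∈ n.properDivisors, cyclotomic d ℤ) * w := by
        rw [map_mul, aeval_X]; ring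
    _ = n * w ^ (n - 1) * w := by rw [hder]; simp
    _ = n := by rw [mul_assoc, ← pow_succ, Nat.sub_add_cancel hn, hw.pow_eq_one, mul_one]

theorem IsPrimitiveRoot.conj_aeval {n : ℕ} (hn : 0 < n) {w : ℂ} (hw : IsPrimitiveRoot w n)
    (p : ℤ[X]) : starRingEnd ℂ (aeval w p) = aeval w (p.comp (X ^ (n - 1))) := by
  have hconj : starRingEnd ℂ w = w ^ (n - 1) := by
    rw [← Complex.inv_eq_conj (Complex.norm_eq_one_of_pow_eq_one hw.pow_eq_one hn.ne'),
      inv_eq_of_mul_eq_one_right]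
    rw [← pow_succ', Nat.sub_add_cancel hn, hw.pow_eq_one]
  rw [aeval_comp, map_pow, aeval_X, ← hconj]
  exact (aeval_algHom_apply (starRingEnd ℂ).toIntAlgHom w p).symm

theorem mul_div_mul_star_div_of_mul_eq {K : Type*} [Field K] [StarRing K] {a b c d r : K}
    (h : d * c = r) (hr : star r = r) : r * (a / d * star (b / d)) = a * star (b * c) / d := by
  rcases eq_or_ne d 0 with rfl | hd
  · simp
  have hd' : star d ≠ 0 := star_ne_zero.2 hd
  rw [← hr, ← h, star_div₀, star_mul, star_mul]
  field_simp

/-- For every positive integer `n`, every entry of `n • (G_n)⁻¹`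
is a rational integer, where `G_n = V_nᴴ * V_n`. -/
theorem nsmul_inv_gram_int_entries (n : ℕ) (hn : 0 < n)
    (ζ : Fin n.totient → ℂ) (hζinj : Function.Injective ζ)
    (hζ : ∀ i, IsPrimitiveRoot (ζ i) n)
    (i j : Fin n.totient) :
    ∃ z : ℤ, (n : ℂ) * ((vand ζ)ᴴ * vand ζ)⁻¹ i j = (z : ℂ) := by
  set Φ := cyclotomic n ℤ
  set h : ℤ[X] := X * ∏ d ∈ n.properDivisors, cyclotomic d ℤ
  have hΦ : Φ.map (algebraMap ℤ ℂ) = ∏ k, (X - C (ζ k)) := by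
    rw [map_cyclotomic, cyclotomic_eq_prod_X_sub_C_of_injective hn hζinj hζ]
  have hgram : ((vand ζ)ᴴ * vand ζ)⁻¹ = (vandermonde ζ)⁻¹ * ((vandermonde ζ)⁻¹)ᴴ := by
    rw [Matrix.mul_inv_rev, conjTranspose_nonsing_inv]
    rfl
  refine ⟨((Φ.divXSubCoeff i * (Φ.divXSubCoeff j * h).comp (X ^ (n - 1))) %ₘ Φ).coeff
    (n.totient - 1), ?_⟩
  rw [hgram, mul_apply, mul_sum, ← eq_intCast (algebraMap ℤ ℂ),
    ← sum_aeval_div_aeval_derivative (cyclotomic.monic n ℤ) hζinj hΦ]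
  refine sum_congr rfl fun k _ => ?_
  have hD := (hζ k).aeval_derivative_cyclotomic_mul hn
  rw [conjTranspose_apply, inv_vandermonde_apply_of_map_eq_prod hζinj hΦ,
    inv_vandermonde_apply_of_map_eq_prod hζinj hΦ, map_mul, ← (hζ k).conj_aeval hn, map_mul]
  exact mul_div_mul_star_div_of_mul_eq hD (star_natCast n)
end

section
/- For every odd positive integer n, the matrices G_{2n} and G_n (both of size φ(n) = φ(2n)) have the same characteristic polynomial; in particular they have the same eigenvalues with the same multiplicities. -/
open Matrix Polynomial BigOperators

/-!
For odd `n`, `z ↦ -z` maps the primitive `n`-th roots of unity bijectively onto the primitive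
`2n`-th roots. The Gram matrix `Vᴴ V` of a Vandermonde matrix only depends on the set of its
nodes, and negating the nodes multiplies column `j` of `V` by `(-1)^j`. Hence `G_{2n} = D G_n D`
with `D = diag((-1)^j)`, an involution, so `G_{2n}` and `G_n` are similar.
-/

theorem Matrix.charpoly_mul_mul_of_mul_self_eq_one {ι R : Type*} [Fintype ι] [DecidableEq ι]
    [CommRing R] {D : Matrix ι ι R} (hD : D * D = 1) (A : Matrix ι ι R) :
    (D * A * D).charpoly = A.charpoly := by
  rw [charpoly_mul_comm, ← Matrix.mul_assoc, hD, Matrix.one_mul]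

theorem IsPrimitiveRoot.neg_of_odd {R : Type*} [CommRing R] [Nontrivial R]
    (hR : ringChar R ≠ 2) {ζ : R} {n : ℕ} (hζ : IsPrimitiveRoot ζ n) (hn : Odd n) :
    IsPrimitiveRoot (-ζ) (2 * n) := by
  have horder : orderOf (-1 : R) = 2 := by rw [orderOf_neg_one, if_neg hR]
  have hcoprime : (orderOf (-1 : R)).Coprime (orderOf ζ) := by
    rw [horder, ← hζ.eq_orderOf]
    exact Nat.coprime_two_left.mpr hn
  convert IsPrimitiveRoot.orderOf (-ζ)
  rw [neg_eq_neg_one_mul, (Commute.all _ _).orderOf_mul_eq_mul_orderOf_of_coprime hcoprime,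
    horder, ← hζ.eq_orderOf]

theorem Complex.primitiveRoots_two_mul_of_odd {n : ℕ} (hn : Odd n) :
    primitiveRoots (2 * n) ℂ = (primitiveRoots n ℂ).image Neg.neg := by
  symm
  apply Finset.eq_of_subset_of_card_le
  · intro w hw
    obtain ⟨z, hz, rfl⟩ := Finset.mem_image.mp hw
    rw [mem_primitiveRoots (by positivity [hn.pos])]
    exact ((mem_primitiveRoots hn.pos).mp hz).neg_of_odd (by simp) hn
  · rw [Finset.card_image_of_injective _ neg_injective, Complex.card_primitiveRoots,
      Complex.card_primitiveRoots, Nat.totient_two_mul_of_odd hn]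

theorem image_univ_eq_primitiveRoots {N : ℕ} {ζ : Fin N.totient → ℂ}
    (hinj : Function.Injective ζ) (hζ : ∀ i, IsPrimitiveRoot (ζ i) N) :
    Finset.univ.image ζ = primitiveRoots N ℂ := by
  apply Finset.eq_of_subset_of_card_le
  · intro z hz
    obtain ⟨i, -, rfl⟩ := Finset.mem_image.mp hz
    exact (mem_primitiveRoots (Nat.totient_pos.mp i.pos)).mpr (hζ i)
  · rw [Finset.card_image_of_injective _ hinj, Complex.card_primitiveRoots, Finset.card_fin]

theorem gram_vand_apply {m : ℕ} (ζ : Fin m → ℂ) (j k : Fin m) :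
    ((vand ζ)ᴴ * vand ζ) j k = ∑ i, star (ζ i) ^ (j : ℕ) * ζ i ^ (k : ℕ) := by
  simp [vand, mul_apply]

theorem gram_vand_eq_of_image_eq {m : ℕ} {ζ η : Fin m → ℂ} (hζ : Function.Injective ζ)
    (hη : Function.Injective η) (h : Finset.univ.image ζ = Finset.univ.image η) :
    (vand ζ)ᴴ * vand ζ = (vand η)ᴴ * vand η := by
  ext j k
  let f : ℂ → ℂ := fun z => star z ^ (j : ℕ) * z ^ (k : ℕ)
  rw [gram_vand_apply, gram_vand_apply, ← Finset.sum_image (f := f) hζ.injOn,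
    ← Finset.sum_image (f := f) hη.injOn, h]

theorem charpoly_gram_vand_eq_of_image_eq {m m' : ℕ} {ζ : Fin m → ℂ} {η : Fin m' → ℂ}
    (hζ : Function.Injective ζ) (hη : Function.Injective η)
    (h : Finset.univ.image ζ = Finset.univ.image η) :
    ((vand ζ)ᴴ * vand ζ).charpoly = ((vand η)ᴴ * vand η).charpoly := by
  obtain rfl : m = m' := by
    simpa [Finset.card_image_of_injective _ hζ, Finset.card_image_of_injective _ hη]
      using congrArg Finset.card h
  rw [gram_vand_eq_of_image_eq hζ hη h]

def signDiag (m : ℕ) : Matrix (Fin m) (Fin m) ℂ :=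
  diagonal fun j => (-1) ^ (j : ℕ)

theorem signDiag_mul_self (m : ℕ) : signDiag m * signDiag m = 1 := by
  rw [signDiag, diagonal_mul_diagonal, ← diagonal_one]
  congr! with j
  rw [← mul_pow, neg_one_mul, neg_neg, one_pow]

theorem signDiag_conjTranspose (m : ℕ) : (signDiag m)ᴴ = signDiag m := by
  rw [signDiag, diagonal_conjTranspose]
  congr! with j
  simp

theorem vand_neg {m : ℕ} (ζ : Fin m → ℂ) : vand (-ζ) = vand ζ * signDiag m := by
  ext i j
  rw [signDiag, mul_diagonal]
  simp only [vand, of_apply, Pi.neg_apply]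
  rw [neg_pow, mul_comm]

theorem gram_vand_neg {m : ℕ} (ζ : Fin m → ℂ) :
    (vand (-ζ))ᴴ * vand (-ζ) = signDiag m * ((vand ζ)ᴴ * vand ζ) * signDiag m := by
  rw [vand_neg, conjTranspose_mul, signDiag_conjTranspose, Matrix.mul_assoc, Matrix.mul_assoc,
    Matrix.mul_assoc]

theorem charpoly_gram_two_mul_general (n : ℕ) (hodd : Odd n)
    (ζ : Fin n.totient → ℂ) (hζinj : Function.Injective ζ)
    (hζ : ∀ i, IsPrimitiveRoot (ζ i) n)
    (ξ : Fin (2 * n).totient → ℂ) (hξinj : Function.Injective ξ)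
    (hξ : ∀ i, IsPrimitiveRoot (ξ i) (2 * n)) :
    ((vand ξ)ᴴ * vand ξ).charpoly = ((vand ζ)ᴴ * vand ζ).charpoly := by
  have himage : Finset.univ.image ξ = Finset.univ.image (-ζ) := by
    rw [image_univ_eq_primitiveRoots hξinj hξ, Complex.primitiveRoots_two_mul_of_odd hodd,
      ← image_univ_eq_primitiveRoots hζinj hζ, Finset.image_image]
    rfl
  rw [charpoly_gram_vand_eq_of_image_eq (η := -ζ) hξinj (neg_injective.comp hζinj) himage,
    gram_vand_neg, charpoly_mul_mul_of_mul_self_eq_one (signDiag_mul_self _)]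

/-- For every odd positive integer `n`, the matrices `G_{2n}` and `G_n`
have the same characteristic polynomial (hence the same eigenvalues with
multiplicities). -/
theorem charpoly_gram_two_mul (n : ℕ) (hn : 0 < n) (hodd : Odd n)
    (ζ : Fin n.totient → ℂ) (hζinj : Function.Injective ζ)
    (hζ : ∀ i, IsPrimitiveRoot (ζ i) n)
    (ξ : Fin (2 * n).totient → ℂ) (hξinj : Function.Injective ξ)
    (hξ : ∀ i, IsPrimitiveRoot (ξ i) (2 * n)) :
    ((vand ξ)ᴴ * vand ξ).charpoly = ((vand ζ)ᴴ * vand ζ).charpoly :=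
  charpoly_gram_two_mul_general n hodd ζ hζinj hζ ξ hξinj hξ
end

section
/- For every prime number p, the characteristic polynomial of G_p satisfies det(G_p − x·Id_{p−1}) = (p − x)^{p−2} · (1 − x); equivalently, the eigenvalues of G_p are p, with multiplicity p − 2, and 1, with multiplicity 1. -/
open Matrix Polynomial BigOperators

/-!
For `i ≠ j` the ratio `r = ζᵢ / ζⱼ` is a nontrivial `p`-th root of unity, so the `p - 1` terms
`∑_{k < p-1} rᵏ` of the `(i, j)` entry of `V Vᴴ` are a full period of `rᵏ` (which sums to `p δᵢⱼ`)
minus its last term `r^(p-1) = r⁻¹ = conj ζᵢ · ζⱼ`. Hence `V Vᴴ = p • 1 - u uᴴ` with `u = conj ζ`,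
a scalar matrix minus a rank-one matrix whose nonzero eigenvalue is `‖u‖² = p - 1`; and `Vᴴ V` has
the same characteristic polynomial as `V Vᴴ`.
-/

theorem Matrix.det_map_C_sub_smul_one {n R : Type*} [Fintype n] [DecidableEq n] [CommRing R]
    (M : Matrix n n R) (q : R[X]) :
    (M.map C - q • (1 : Matrix n n R[X])).det = (-1) ^ Fintype.card n * M.charpoly.comp q := by
  have h : M.map C - q • (1 : Matrix n n R[X]) = -(charmatrix M).map (compRingHom q) := by
    ext i j : 1
    by_cases hij : i = j
    · subst hij; simp
    · simp [hij]
  rw [h, det_neg, charpoly, ← coe_compRingHom_apply, RingHom.map_det, RingHom.mapMatrix_apply]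

theorem Matrix.det_map_C_sub_smul_one_mul_comm {n R : Type*} [Fintype n] [DecidableEq n]
    [CommRing R] (A B : Matrix n n R) (q : R[X]) :
    ((A * B).map C - q • (1 : Matrix n n R[X])).det = ((B * A).map C - q • 1).det := by
  rw [det_map_C_sub_smul_one, det_map_C_sub_smul_one, charpoly_mul_comm]

theorem Matrix.det_map_C_scalar_sub_vecMulVec_sub_smul_one {n R : Type*} [Fintype n]
    [DecidableEq n] [Nonempty n] [CommRing R] (c : R) (u v : n → R) (q : R[X]) :
    ((scalar n c - vecMulVec u v).map C - q • (1 : Matrix n n R[X])).det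
      = (C c - q) ^ (Fintype.card n - 1) * (C c - q - C (u ⬝ᵥ v)) := by
  have h : (scalar n c - vecMulVec u v).map C - q • (1 : Matrix n n R[X])
      = -((vecMulVec u v).map C - (C c - q) • 1) := by
    ext i j : 1
    by_cases hij : i = j
    · subst hij
      simp only [scalar_apply, sub_apply, map_apply, diagonal_apply_eq, map_sub, smul_apply,
        one_apply_eq, smul_eq_mul, mul_one, neg_apply]
      ring
    · simp [hij]
  obtain ⟨N, hN⟩ : ∃ N, Fintype.card n = N + 1 := Nat.exists_eq_add_one.mpr Fintype.card_pos
  rw [h, det_neg, det_map_C_sub_smul_one, ← mul_assoc, ← mul_pow, neg_one_mul, neg_neg, one_pow,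
    one_mul, charpoly_vecMulVec, hN]
  simp only [add_tsub_cancel_right, smul_eq_C_mul, sub_comp, mul_comp, pow_comp, X_comp, C_comp]
  ring

theorem sum_range_pow_of_pow_eq_one {K : Type*} [Field K] [DecidableEq K] {r : K} {n : ℕ}
    (h : r ^ n = 1) : ∑ k ∈ Finset.range n, r ^ k = if r = 1 then (n : K) else 0 := by
  split_ifs with hr
  · simp [hr]
  · rw [geom_sum_eq hr, h, sub_self, zero_div]

theorem Complex.star_eq_inv_of_pow_eq_one {z : ℂ} {n : ℕ} (h : z ^ n = 1) (hn : n ≠ 0) :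
    star z = z⁻¹ :=
  (inv_eq_conj (norm_eq_one_of_pow_eq_one h hn)).symm

theorem vand_mul_conjTranspose_of_pow_eq_one {m n : ℕ} (hmn : m + 1 = n) {ζ : Fin m → ℂ}
    (hinj : Function.Injective ζ) (hroot : ∀ i, ζ i ^ n = 1) :
    vand ζ * (vand ζ)ᴴ = scalar (Fin m) (n : ℂ) - vecMulVec (star ζ) ζ := by
  have hstar i : star (ζ i) = (ζ i)⁻¹ := Complex.star_eq_inv_of_pow_eq_one (hroot i) (by omega)
  have hne i : ζ i ≠ 0 := fun h => by simpa [h, ← hmn] using hroot i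
  ext i j
  set r := ζ i / ζ j
  have hr : r ^ n = 1 := by rw [div_pow, hroot, hroot, div_one]
  have hentry : (vand ζ * (vand ζ)ᴴ) i j = ∑ k ∈ Finset.range m, r ^ k := by
    rw [← Fin.sum_univ_eq_sum_range (fun k => r ^ k)]
    simp [mul_apply, vand, hstar, r, div_eq_mul_inv, mul_pow]
  have hperiod : ∑ k ∈ Finset.range m, r ^ k + r ^ m = if i = j then (n : ℂ) else 0 := by
    rw [← Finset.sum_range_succ, hmn, sum_range_pow_of_pow_eq_one hr]
    exact if_congr ((div_eq_one_iff_eq (hne j)).trans hinj.eq_iff) rfl rfl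
  have hrm : r ^ m = star (ζ i) * ζ j := by
    have : r ^ m * r = 1 := by rw [← pow_succ, hmn, hr]
    rw [eq_inv_of_mul_eq_one_left this, inv_div, hstar, div_eq_inv_mul]
  rw [hentry, eq_sub_of_add_eq hperiod, hrm]
  by_cases hij : i = j
  · subst hij; simp [Matrix.natCast_apply, vecMulVec_apply]
  · simp [Matrix.natCast_apply, vecMulVec_apply, hij]

theorem star_dotProduct_self_of_pow_eq_one {ι : Type*} [Fintype ι] {n : ℕ} (hn : n ≠ 0)
    {ζ : ι → ℂ} (hroot : ∀ i, ζ i ^ n = 1) : star ζ ⬝ᵥ ζ = Fintype.card ι := by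
  have hne i : ζ i ≠ 0 := fun h => by simpa [h, hn] using hroot i
  simp [dotProduct, Complex.star_eq_inv_of_pow_eq_one (hroot _) hn, hne]

/-- For every prime `p`,
`det(G_p - x • Id_{p-1}) = (p - x) ^ (p - 2) * (1 - x)` as polynomials in `x`;
i.e. the eigenvalues of `G_p` are `p` with multiplicity `p - 2` and `1` with
multiplicity `1`. -/
theorem charpoly_gram_prime (p : ℕ) (hp : p.Prime)
    (ζ : Fin p.totient → ℂ) (hζinj : Function.Injective ζ)
    (hζ : ∀ i, IsPrimitiveRoot (ζ i) p) :
    Matrix.det (((vand ζ)ᴴ * vand ζ).map Polynomial.C -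
        (Polynomial.X : Polynomial ℂ) • (1 : Matrix (Fin p.totient) (Fin p.totient) (Polynomial ℂ)))
      = (Polynomial.C ((p : ℂ)) - Polynomial.X) ^ (p - 2) * (1 - Polynomial.X) := by
  have hroot i : ζ i ^ p = 1 := (hζ i).pow_eq_one
  have hcard : p.totient + 1 = p := by rw [Nat.totient_prime hp, Nat.sub_add_cancel hp.one_le]
  have : Nonempty (Fin p.totient) := ⟨⟨0, Nat.totient_pos.mpr hp.pos⟩⟩
  rw [det_map_C_sub_smul_one_mul_comm, vand_mul_conjTranspose_of_pow_eq_one hcard hζinj hroot,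
    det_map_C_scalar_sub_vecMulVec_sub_smul_one, star_dotProduct_self_of_pow_eq_one hp.ne_zero hroot,
    Fintype.card_fin, show p.totient - 1 = p - 2 by omega]
  have hcast : (p : ℂ) = p.totient + 1 := by exact_mod_cast hcard.symm
  rw [hcast, map_add, map_one]
  ring
end

section
/- Let n be a positive integer, m := φ(n), and write V_n^{−1} = (w_{i,k})_{1 ≤ i,k ≤ m}. For all integers i, ℓ with 1 ≤ i ≤ m and ℓ ≥ 0, the complex number S_{i,ℓ} := Σ_{k=1}^m w_{i,k} ζ_k^ℓ is a (rational) integer, i.e., it lies in the image of ℤ in ℂ. -/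
open Matrix Polynomial BigOperators

/-!
Reducing `X ^ l` modulo the cyclotomic polynomial `Φ_n` gives an integer polynomial `r` of degree
`< φ(n)` with `r(ζ_k) = ζ_k ^ l` for every `k`. Hence the vector `(ζ_k ^ l)_k` is the Vandermonde
matrix applied to the coefficient vector of `r`, and `S_{i,l}` is the `i`-th coefficient of `r`.
-/

theorem Matrix.vandermonde_mulVec_coeff {R S : Type*} [CommRing R] [CommRing S] [Algebra R S]
    {m : ℕ} (v : Fin m → S) {p : R[X]} (hp : p.natDegree < m) :
    vandermonde v *ᵥ (fun j : Fin m => algebraMap R S (p.coeff j)) = fun k => aeval (v k) p := by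
  ext k
  rw [aeval_eq_sum_range' hp, ← Fin.sum_univ_eq_sum_range]
  simp only [mulVec, dotProduct, vandermonde_apply, Algebra.smul_def, mul_comm]

theorem Matrix.inv_vandermonde_mulVec_aeval {R K : Type*} [CommRing R] [Field K] [Algebra R K]
    {m : ℕ} {v : Fin m → K} (hv : Function.Injective v) {p : R[X]} (hp : p.natDegree < m) :
    (vandermonde v)⁻¹ *ᵥ (fun k => aeval (v k) p) =
      fun j : Fin m => algebraMap R K (p.coeff j) := by
  have hdet : IsUnit (vandermonde v).det := (det_vandermonde_ne_zero_iff.mpr hv).isUnit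
  rw [← vandermonde_mulVec_coeff v hp, mulVec_mulVec, nonsing_inv_mul _ hdet, one_mulVec]

theorem IsPrimitiveRoot.aeval_modByMonic_cyclotomic {K : Type*} [CommRing K] [IsDomain K]
    {n : ℕ} {μ : K} (hμ : IsPrimitiveRoot μ n) (hn : 0 < n) (p : ℤ[X]) :
    aeval μ (p %ₘ cyclotomic n ℤ) = aeval μ p :=
  aeval_modByMonic_eq_self_of_root <| by
    rw [aeval_def, eval₂_eq_eval_map, map_cyclotomic]
    exact hμ.isRoot_cyclotomic hn

theorem Polynomial.natDegree_modByMonic_cyclotomic_lt {R : Type*} [CommRing R] [Nontrivial R]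
    (p : R[X]) {n : ℕ} (hn : 0 < n) : (p %ₘ cyclotomic n R).natDegree < n.totient := by
  have hdeg := natDegree_cyclotomic n R
  refine hdeg ▸ natDegree_modByMonic_lt p (cyclotomic.monic n R) fun h => ?_
  rw [h, natDegree_one] at hdeg
  exact (Nat.totient_pos.mpr hn).ne hdeg

/-- Writing `W = V_n⁻¹`, for all `i` and all `ℓ ≥ 0` the complex
number `S_{i,ℓ} = ∑ k, W i k * ζ k ^ ℓ` is a rational integer. -/
theorem sum_inv_vand_pow_int (n : ℕ) (hn : 0 < n)
    (ζ : Fin n.totient → ℂ) (hζinj : Function.Injective ζ)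
    (hζ : ∀ i, IsPrimitiveRoot (ζ i) n)
    (i : Fin n.totient) (l : ℕ) :
    ∃ z : ℤ, (∑ k, (vand ζ)⁻¹ i k * ζ k ^ l) = (z : ℂ) := by
  set r : ℤ[X] := X ^ l %ₘ cyclotomic n ℤ
  have hpow : (fun k => ζ k ^ l) = fun k => aeval (ζ k) r := by
    ext k
    rw [(hζ k).aeval_modByMonic_cyclotomic hn, map_pow, aeval_X]
  refine ⟨r.coeff i, ?_⟩
  change ((vandermonde ζ)⁻¹ *ᵥ fun k => ζ k ^ l) i = _
  rw [hpow, inv_vandermonde_mulVec_aeval hζinj (natDegree_modByMonic_cyclotomic_lt _ hn)]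
  rfl
end
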